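/- arXiv:2202.04796 — 4 statements merged into one kernel-verified Lean document; each statement's English description precedes it below -/
import Mathlib

section
/- Fix any τ ∈ (0,1). Then P( f(S_1,…,S_r,S_{n+1}) ≤ ē_τ^M ) ≥ τ·(n−r)/(n+1). (This is the one-sided coverage guarantee of Proposition 1: the interval (−∞, ē_τ^M] is a level-(τ(n−r)/(n+1)) one-sided forecast interval for the transfer error on the unseen domain n+1.) -/
open MeasureTheory ProbabilityTheory

/-- The set of (r+1)-tuples of pairwise distinct indices from `Fin m`
(tuples of `s` pairwise distinct indices, i.e. injections `Fin s → Fin m`). -/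
abbrev TransferUQ.Tup (s m : ℕ) := {g : Fin s → Fin m // Function.Injective g}

open Classical in
/-- `F_M((-∞, b])`: the mass that the pooled empirical distribution of transfer errors
`F_M = ((n-r-1)!/n!) ∑_{(𝒯,d) ∈ 𝕋_{r+1,n}} δ_{e_{𝒯,d}}` assigns to `(-∞, b]`,
where `E g` is the transfer error associated to the tuple `g ∈ 𝕋_{r+1,n}`. -/
noncomputable def TransferUQ.FMIic (n r : ℕ) (E : TransferUQ.Tup (r+1) n → ℝ) (b : ℝ) : ℝ :=
  ((n - r - 1).factorial : ℝ) / (n.factorial : ℝ) *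
    (Finset.univ.filter (fun g : TransferUQ.Tup (r+1) n => E g ≤ b)).card

/-- The upper `τ`-th quantile `ē_τ^M = inf {b : F_M((-∞,b]) ≥ τ}` of the pooled empirical
distribution of transfer errors. -/
noncomputable def TransferUQ.ebar (n r : ℕ) (E : TransferUQ.Tup (r+1) n → ℝ) (τ : ℝ) : ℝ :=
  sInf {b : ℝ | τ ≤ TransferUQ.FMIic n r E b}

/-!
Pass to the full sample `S_1, …, S_{n+1}` and let `c = τ (n - r) / (n + 1)`. Relabelling the
samples permutes the `(r+1)`-tuples of distinct indices and leaves the pooled empirical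
distribution of all their transfer errors, hence its `c`-quantile, unchanged; since an i.i.d.
sample is exchangeable, every tuple has the same probability of having its transfer error below
that quantile. At every sample at least a fraction `c` of the tuples do, so each of them, in
particular the test tuple `(1, …, r; n+1)`, does so with probability at least `c`. Finally the
tuples avoiding `n+1` make up the fraction `(n - r)/(n + 1)` of all tuples, so the `c`-quantile of
the full sample is at most the `τ`-quantile `ē_τ^M` of the observed domains.
-/

open scoped ENNReal
open Finset

lemma measurePreserving_comp_perm {ι α : Type*} [Fintype ι] [DecidableEq ι] [MeasurableSpace α]
    (μ : Measure α) [SigmaFinite μ] (σ : Equiv.Perm ι) :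
    MeasurePreserving (fun x : ι → α => x ∘ σ) (Measure.pi fun _ => μ)
      (Measure.pi fun _ => μ) :=
  (measurePreserving_piCongrLeft (fun _ => μ) σ).symm

open Classical in
lemma le_measure_of_le_card_mem {α ι : Type*} [MeasurableSpace α] [Fintype ι] {μ : Measure α}
    [IsProbabilityMeasure μ] {A : ι → Set α} (hA : ∀ i, MeasurableSet (A i)) {i₀ : ι}
    (hA_eq : ∀ i, μ (A i) = μ (A i₀)) {c : ℝ≥0∞}
    (hc : ∀ x, c * Fintype.card ι ≤ #{i | x ∈ A i}) : c ≤ μ (A i₀) := by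
  have hcard : (Fintype.card ι : ℝ≥0∞) ≠ 0 := by
    have : Nonempty ι := ⟨i₀⟩
    exact_mod_cast Fintype.card_ne_zero
  refine (ENNReal.mul_le_mul_iff_left hcard (ENNReal.natCast_ne_top _)).1 ?_
  calc c * Fintype.card ι = ∫⁻ _, c * Fintype.card ι ∂μ := by simp
    _ ≤ ∫⁻ x, ∑ i, (A i).indicator 1 x ∂μ :=
        lintegral_mono fun x => (hc x).trans_eq (by simp [Set.indicator_apply, Finset.sum_boole])
    _ = ∑ i, μ (A i) := by
        rw [lintegral_finsetSum _ fun i _ => measurable_one.indicator (hA i)]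
        simp [lintegral_indicator_one (hA _)]
    _ = μ (A i₀) * Fintype.card ι := by simp [hA_eq, mul_comm]

namespace TransferUQ

section Tuples

variable {s m : ℕ}

lemma card_tup (s m : ℕ) : Fintype.card (Tup s m) = m.descFactorial s := by
  classical
  rw [Fintype.card_congr (Equiv.subtypeInjectiveEquivEmbedding (Fin s) (Fin m))]
  simp

lemma nonempty_tup (h : s ≤ m) : Nonempty (Tup s m) :=
  ⟨⟨Fin.castLE h, Fin.castLE_injective h⟩⟩

def Tup.castSucc (g : Tup s m) : Tup s (m+1) :=
  ⟨Fin.castSucc ∘ g.1, (Fin.castSucc_injective m).comp g.2⟩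

lemma Tup.castSucc_injective : Function.Injective (Tup.castSucc (s := s) (m := m)) :=
  fun _ _ h => Subtype.ext <| funext fun i =>
    Fin.castSucc_injective m (congrFun (congrArg Subtype.val h) i)

def Tup.permCongr (σ : Equiv.Perm (Fin m)) : Tup s m ≃ Tup s m where
  toFun g := ⟨σ ∘ g.1, σ.injective.comp g.2⟩
  invFun g := ⟨σ.symm ∘ g.1, σ.symm.injective.comp g.2⟩
  left_inv g := by ext; simp
  right_inv g := by ext; simp

lemma Tup.exists_permCongr_eq (g g' : Tup s m) :
    ∃ σ : Equiv.Perm (Fin m), Tup.permCongr σ g = g' := by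
  classical
  let e : Set.range g.1 ≃ Set.range g'.1 :=
    (Equiv.ofInjective _ g.2).symm.trans (Equiv.ofInjective _ g'.2)
  refine ⟨e.extendSubtype, Subtype.ext <| funext fun i => ?_⟩
  change e.extendSubtype (g.1 i) = g'.1 i
  rw [e.extendSubtype_apply_of_mem _ (Set.mem_range_self i)]
  simp [e]

/-- The tuple `(1, …, r; n+1)`: the first `r` domains for training, the unseen one for testing. -/
def Tup.snocLast {r n : ℕ} (hrn : r ≤ n) : Tup (r+1) (n+1) :=
  ⟨Fin.snoc (Fin.castLE (by omega)) (Fin.last n),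
    Fin.snoc_injective_of_injective (Fin.castLE_injective _) fun ⟨i, hi⟩ => by
      simp [Fin.ext_iff] at hi
      omega⟩

end Tuples

section EmpiricalQuantile

variable {n r : ℕ} (E : Tup (r+1) n → ℝ)

open Classical in
lemma FMIic_eq_card_div (hrn : r < n) (b : ℝ) :
    FMIic n r E b = #{g | E g ≤ b} / Fintype.card (Tup (r+1) n) := by
  have hfact := Nat.factorial_mul_descFactorial (show r + 1 ≤ n by omega)
  rw [show n - (r + 1) = n - r - 1 by omega] at hfact
  rw [FMIic, card_tup, ← hfact]
  push_cast
  field_simp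

lemma exists_le_of_FMIic_pos {b : ℝ} (h : 0 < FMIic n r E b) : ∃ g, E g ≤ b := by
  classical
  by_contra! hlt
  simp [FMIic, Finset.filter_false_of_mem fun g _ => not_le.2 (hlt g)] at h

lemma exists_FMIic_eq {b : ℝ} (h : ∃ g, E g ≤ b) :
    ∃ g, E g ≤ b ∧ FMIic n r E (E g) = FMIic n r E b := by
  classical
  obtain ⟨g₀, hg₀⟩ := h
  obtain ⟨g, hg, hmax⟩ :=
    Finset.exists_max_image {g | E g ≤ b} E ⟨g₀, by simpa using hg₀⟩
  rw [Finset.mem_filter] at hg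
  refine ⟨g, hg.2, ?_⟩
  unfold FMIic
  congr 3
  ext g'
  simp only [Finset.mem_filter, Finset.mem_univ, true_and]
  exact ⟨fun h => h.trans hg.2, fun h => hmax g' (by simpa using h)⟩

lemma FMIic_eq_one (hrn : r < n) {b : ℝ} (hb : ∀ g, E g ≤ b) : FMIic n r E b = 1 := by
  classical
  have := nonempty_tup (show r + 1 ≤ n by omega)
  rw [FMIic_eq_card_div E hrn, Finset.filter_true_of_mem fun g _ => hb g, Finset.card_univ,
    div_self (by exact_mod_cast Fintype.card_ne_zero)]

variable {E} {c : ℝ}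

lemma nonempty_setOf_le_FMIic (hrn : r < n) (hc1 : c ≤ 1) :
    {b | c ≤ FMIic n r E b}.Nonempty := by
  obtain ⟨M, hM⟩ := (Set.finite_range E).bddAbove
  exact ⟨M, hc1.trans (FMIic_eq_one E hrn fun g => hM ⟨g, rfl⟩).ge⟩

lemma ebar_le (hc : 0 < c) {b : ℝ} (hb : c ≤ FMIic n r E b) : ebar n r E c ≤ b := by
  obtain ⟨m, hm⟩ := (Set.finite_range E).bddBelow
  refine csInf_le ⟨m, fun b' hb' => ?_⟩ hb
  obtain ⟨g, hg⟩ := exists_le_of_FMIic_pos E (hc.trans_le hb')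
  exact (hm ⟨g, rfl⟩).trans hg

lemma le_ebar_iff (hrn : r < n) (hc : 0 < c) (hc1 : c ≤ 1) {a : ℝ} :
    a ≤ ebar n r E c ↔ ∀ g, c ≤ FMIic n r E (E g) → a ≤ E g := by
  refine ⟨fun h g hg => h.trans (ebar_le hc hg), fun h => ?_⟩
  refine le_csInf (nonempty_setOf_le_FMIic hrn hc1) fun b hb => ?_
  obtain ⟨g, hgb, hFg⟩ := exists_FMIic_eq E (exists_le_of_FMIic_pos E (hc.trans_le hb))
  exact (h g (hFg ▸ hb)).trans hgb

lemma le_FMIic_ebar (hrn : r < n) (hc : 0 < c) (hc1 : c ≤ 1) :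
    c ≤ FMIic n r E (ebar n r E c) := by
  classical
  obtain ⟨b, hb⟩ := nonempty_setOf_le_FMIic (E := E) hrn hc1
  obtain ⟨g₁, -, hFg₁⟩ := exists_FMIic_eq E (exists_le_of_FMIic_pos E (hc.trans_le hb))
  obtain ⟨g, hg, hmin⟩ := Finset.exists_min_image {g | c ≤ FMIic n r E (E g)} E
    ⟨g₁, by simpa [hFg₁] using hb⟩
  rw [Finset.mem_filter] at hg
  have hebar : ebar n r E c = E g :=
    le_antisymm (ebar_le hc hg.2)
      ((le_ebar_iff hrn hc hc1).2 fun g' hg' => hmin g' (by simpa using hg'))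
  exact hebar ▸ hg.2

lemma ebar_le_ebar {n' : ℕ} {E' : Tup (r+1) n' → ℝ} {c' : ℝ} (hrn' : r < n')
    (hc' : c' ≤ 1) (hc : 0 < c) (h : ∀ b, c' ≤ FMIic n' r E' b → c ≤ FMIic n r E b) :
    ebar n r E c ≤ ebar n' r E' c' :=
  le_csInf (nonempty_setOf_le_FMIic hrn' hc') fun b hb => ebar_le hc (h b hb)

end EmpiricalQuantile

section Relabelling

variable {n r : ℕ}

lemma FMIic_comp_equiv (E : Tup (r+1) n → ℝ) (e : Tup (r+1) n ≃ Tup (r+1) n) :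
    FMIic n r (E ∘ e) = FMIic n r E := by
  classical
  funext b
  unfold FMIic
  congr 2
  exact_mod_cast Finset.card_equiv e (by simp)

lemma ebar_comp_equiv (E : Tup (r+1) n → ℝ) (e : Tup (r+1) n ≃ Tup (r+1) n) (c : ℝ) :
    ebar n r (E ∘ e) c = ebar n r E c := by
  rw [ebar, ebar, FMIic_comp_equiv]

/-- `n + 1` domains carry `(n + 1) / (n - r)` times as many tuples as `n` domains. -/
lemma FMIic_castSucc_le (hrn : r < n) (E : Tup (r+1) (n+1) → ℝ) (b : ℝ) :
    (n - r) / (n + 1) * FMIic n r (E ∘ Tup.castSucc) b ≤ FMIic (n+1) r E b := by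
  classical
  have hcard : #{g | (E ∘ Tup.castSucc) g ≤ b} ≤ #{g | E g ≤ b} :=
    Finset.card_le_card_of_injOn Tup.castSucc (fun g hg => by simpa using hg)
      Tup.castSucc_injective.injOn
  have hnr : (0 : ℝ) < n - r := by rw [sub_pos]; exact_mod_cast hrn
  rw [FMIic_eq_card_div _ hrn, FMIic_eq_card_div _ (by omega), card_tup, card_tup,
    Nat.succ_descFactorial_succ, Nat.descFactorial_succ]
  push_cast [hrn.le]
  calc _ = (#{g | (E ∘ Tup.castSucc) g ≤ b} : ℝ) / ((n + 1) * n.descFactorial r) := by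
        field_simp
    _ ≤ _ := by gcongr

lemma ebar_succ_le_ebar (hrn : r < n) {τ : ℝ} (hτ : 0 < τ) (hτ1 : τ ≤ 1)
    (E : Tup (r+1) (n+1) → ℝ) :
    ebar (n+1) r E (τ * (n - r) / (n + 1)) ≤ ebar n r (E ∘ Tup.castSucc) τ := by
  have hnr : (0 : ℝ) < n - r := by rw [sub_pos]; exact_mod_cast hrn
  refine ebar_le_ebar hrn hτ1 (by positivity) fun b hb => ?_
  calc τ * (n - r) / (n + 1) = (n - r) / (n + 1) * τ := by ring
    _ ≤ (n - r) / (n + 1) * FMIic n r (E ∘ Tup.castSucc) b := by gcongr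
    _ ≤ FMIic (n+1) r E b := FMIic_castSucc_le hrn E b

end Relabelling

section Measurability

variable {α : Type*} [MeasurableSpace α] {n r : ℕ} {E : α → Tup (r+1) n → ℝ}

lemma measurable_FMIic (hE : ∀ g, Measurable fun x => E x g) {b : α → ℝ}
    (hb : Measurable b) : Measurable fun x => FMIic n r (E x) (b x) := by
  classical
  simp only [FMIic, Finset.card_filter, Nat.cast_sum, Nat.cast_ite, Nat.cast_one, Nat.cast_zero]
  exact (Finset.measurable_sum _ fun g _ =>
    (measurable_const.ite (measurableSet_le (hE g) hb) measurable_const)).const_mul _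

lemma measurable_ebar (hrn : r < n) {c : ℝ} (hc : 0 < c) (hc1 : c ≤ 1)
    (hE : ∀ g, Measurable fun x => E x g) : Measurable fun x => ebar n r (E x) c := by
  refine measurable_of_Ici fun a => ?_
  have hpre : (fun x => ebar n r (E x) c) ⁻¹' Set.Ici a =
      ⋂ g, {x | c ≤ FMIic n r (E x) (E x g) → a ≤ E x g} := by
    ext x
    simp [le_ebar_iff hrn hc hc1]
  rw [hpre]
  exact .iInter fun g => (measurableSet_le measurable_const (measurable_FMIic hE (hE g))).imp
    (measurableSet_le measurable_const (hE g))

end Measurability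

section Coverage

variable {𝒮 : Type*} [MeasurableSpace 𝒮] {m r : ℕ}

/-- `transferErrors f x g = e_{(g 0, …, g (r-1)), g r}` for the sample `x`. -/
def transferErrors (f : (Fin (r+1) → 𝒮) → ℝ) (x : Fin m → 𝒮) : Tup (r+1) m → ℝ :=
  fun g => f (x ∘ g.1)

lemma measurable_transferErrors {f : (Fin (r+1) → 𝒮) → ℝ} (hf : Measurable f)
    (g : Tup (r+1) m) : Measurable fun x : Fin m → 𝒮 => transferErrors f x g :=
  hf.comp (measurable_pi_iff.mpr fun _ => measurable_pi_apply _)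

lemma measurableSet_transferErrors_le_ebar (hrm : r < m) {f : (Fin (r+1) → 𝒮) → ℝ}
    (hf : Measurable f) {c : ℝ} (hc : 0 < c) (hc1 : c ≤ 1) (g : Tup (r+1) m) :
    MeasurableSet {x | transferErrors f x g ≤ ebar m r (transferErrors f x) c} :=
  measurableSet_le (measurable_transferErrors hf g)
    (measurable_ebar hrm hc hc1 (measurable_transferErrors hf))

theorem le_pi_transferErrors_le_ebar (μ : Measure 𝒮) [IsProbabilityMeasure μ] (hrm : r < m)
    {f : (Fin (r+1) → 𝒮) → ℝ} (hf : Measurable f) {c : ℝ} (hc : 0 < c) (hc1 : c ≤ 1)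
    (g : Tup (r+1) m) :
    ENNReal.ofReal c ≤
      Measure.pi (fun _ => μ) {x | transferErrors f x g ≤ ebar m r (transferErrors f x) c} := by
  classical
  have hA := measurableSet_transferErrors_le_ebar hrm hf hc hc1
  refine le_measure_of_le_card_mem hA (fun g' => ?_) fun x => ?_
  · obtain ⟨σ, rfl⟩ := Tup.exists_permCongr_eq g g'
    have hpre : {x | transferErrors f x (Tup.permCongr σ g) ≤ ebar m r (transferErrors f x) c} =
        (· ∘ σ) ⁻¹' {x | transferErrors f x g ≤ ebar m r (transferErrors f x) c} := by
      ext x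
      change transferErrors f x (Tup.permCongr σ g) ≤ _ ↔
        transferErrors f x (Tup.permCongr σ g) ≤
          ebar m r (transferErrors f x ∘ Tup.permCongr σ) c
      rw [ebar_comp_equiv]
    rw [hpre, (measurePreserving_comp_perm μ σ).measure_preimage (hA g).nullMeasurableSet]
  · have hquant := le_FMIic_ebar (E := transferErrors f x) hrm hc hc1
    rw [FMIic_eq_card_div _ hrm, le_div_iff₀ (by simp [Fintype.card_pos_iff, nonempty_tup hrm])]
      at hquant
    rw [← ENNReal.ofReal_natCast, ← ENNReal.ofReal_mul hc.le, ← ENNReal.ofReal_natCast]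
    exact ENNReal.ofReal_le_ofReal hquant

end Coverage

end TransferUQ

open TransferUQ

/-- **Proposition 1, one-sided guarantee.** If `S_1, …, S_{n+1}` are i.i.d. samples and
`e_{(d_1,…,d_r),d} = f(S_{d_1},…,S_{d_r},S_d)` is the transfer error from training samples
`d_1,…,d_r` to test sample `d`, then the transfer error `f(S_1,…,S_r,S_{n+1})` onto the unseen
domain `n+1` satisfies `P(f(S_1,…,S_r,S_{n+1}) ≤ ē_τ^M) ≥ τ (n-r)/(n+1)`. -/
theorem transfer_error_one_sided_coverage
    {Ω : Type*} [MeasurableSpace Ω] (P : Measure Ω)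
    {𝒮 : Type*} [MeasurableSpace 𝒮] (μ : Measure 𝒮) [IsProbabilityMeasure μ]
    (n r : ℕ) (hrn : r < n)
    (S : Fin (n+1) → Ω → 𝒮) (hSmeas : ∀ i, Measurable (S i))
    (hindep : iIndepFun S P)
    (hlaw : ∀ i, P.map (S i) = μ)
    (f : (Fin (r+1) → 𝒮) → ℝ) (hf : Measurable f)
    (τ : ℝ) (hτ : τ ∈ Set.Ioo (0:ℝ) 1) :
    ENNReal.ofReal (τ * ((n : ℝ) - r) / (n + 1)) ≤
      P {ω | f (Fin.snoc (fun i : Fin r => S (Fin.castLE (by omega) i) ω) (S (Fin.last n) ω)) ≤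
          TransferUQ.ebar n r
            (fun g => f (fun i => S (Fin.castSucc (g.val i)) ω)) τ} := by
  obtain ⟨hτ0, hτ1⟩ := hτ
  set c := τ * ((n : ℝ) - r) / (n + 1)
  have hnr : (r : ℝ) < n := by exact_mod_cast hrn
  have hc0 : 0 < c := div_pos (mul_pos hτ0 (sub_pos.2 hnr)) (by positivity)
  have hc1 : c ≤ 1 := by
    rw [div_le_one (by positivity)]
    nlinarith [(Nat.cast_nonneg r : (0 : ℝ) ≤ r)]
  let X : Ω → Fin (n+1) → 𝒮 := fun ω i => S i ω
  have hmap : P.map X = Measure.pi fun _ => μ := by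
    rw [hindep.map_fun_eq_pi_map fun i => (hSmeas i).aemeasurable]
    simp only [hlaw]
  let B := {x | transferErrors f x (Tup.snocLast hrn.le) ≤ ebar (n+1) r (transferErrors f x) c}
  calc ENNReal.ofReal c ≤ (Measure.pi fun _ => μ) B :=
        le_pi_transferErrors_le_ebar μ (by omega) hf hc0 hc1 _
    _ = P (X ⁻¹' B) := by
        rw [← hmap, Measure.map_apply (measurable_pi_iff.mpr hSmeas)
          (measurableSet_transferErrors_le_ebar (by omega) hf hc0 hc1 _)]
    _ ≤ _ := by
        refine measure_mono fun ω hω => ?_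
        have htest : f (Fin.snoc (fun i : Fin r => S (Fin.castLE (by omega) i) ω)
            (S (Fin.last n) ω)) = transferErrors f (X ω) (Tup.snocLast hrn.le) := by
          simp only [transferErrors, Tup.snocLast, X, Fin.comp_snoc]
          rfl
        exact htest.trans_le (le_trans hω (ebar_succ_le_ebar hrn hτ0 hτ1.le _))
end

section
/- (Extreme points of the box in linear-fractional minimization.) Let n ≥ 1, Γ > 1, and Ψ ∈ ℝ^n. Then the minimum over w ∈ [Γ^{-1}, Γ]^n of the ratio (Σ_{i=1}^n w_i Ψ_i) / (Σ_{i=1}^n w_i) equals the minimum of the same ratio over w ∈ {Γ^{-1}, Γ}^n. In particular, the minimum over the box is attained at a vertex of the box. -/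
open Finset

private lemma lfb_step {n : ℕ} {Γ : ℝ} (hΓ : 1 < Γ) (Ψ : Fin n → ℝ)
    (w : Fin n → ℝ) (hw : ∀ i, w i ∈ Set.Icc Γ⁻¹ Γ) (i : Fin n) :
    ∃ t : ℝ, (t = Γ⁻¹ ∨ t = Γ) ∧
      (∑ j, Function.update w i t j * Ψ j) / (∑ j, Function.update w i t j) ≤
        (∑ j, w j * Ψ j) / (∑ j, w j) := by
  have hΓ0 : (0:ℝ) < Γ := lt_trans one_pos hΓ
  have hΓi0 : (0:ℝ) < Γ⁻¹ := inv_pos.2 hΓ0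
  set a : ℝ := ∑ j ∈ univ.erase i, w j * Ψ j with ha
  set b : ℝ := ∑ j ∈ univ.erase i, w j with hb
  have hb0 : 0 ≤ b := Finset.sum_nonneg fun j _ => le_of_lt (lt_of_lt_of_le hΓi0 (hw j).1)
  have hsum : ∀ t : ℝ, (∑ j, Function.update w i t j) = t + b := by
    intro t
    rw [Finset.sum_update_of_mem (Finset.mem_univ i), Finset.sdiff_singleton_eq_erase, hb]
  have hsum2 : ∀ t : ℝ, (∑ j, Function.update w i t j * Ψ j) = t * Ψ i + a := by
    intro t
    have he : (fun j => Function.update w i t j * Ψ j) =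
        Function.update (fun j => w j * Ψ j) i (t * Ψ i) := by
      funext j
      rcases eq_or_ne j i with rfl | hj
      · simp
      · simp [Function.update_of_ne hj]
    rw [he, Finset.sum_update_of_mem (Finset.mem_univ i), Finset.sdiff_singleton_eq_erase, ha]
  -- the function f t = (t*Ψi + a)/(t + b)
  have key : ∀ s t : ℝ, 0 < s → 0 < t →
      (t * Ψ i + a)/(t + b) - (s * Ψ i + a)/(s + b) =
        (t - s) * (Ψ i * b - a) / ((t + b) * (s + b)) := by
    intro s t hs ht
    have h1 : t + b ≠ 0 := by positivity
    have h2 : s + b ≠ 0 := by positivity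
    field_simp
    ring
  have hwi := hw i
  have hwi0 : 0 < w i := lt_of_lt_of_le hΓi0 hwi.1
  have hupd : Function.update w i (w i) = w := Function.update_eq_self i w
  have h3 : (∑ j, w j) = w i + b := by
    have := hsum (w i); rwa [hupd] at this
  have h4 : (∑ j, w j * Ψ j) = w i * Ψ i + a := by
    have := hsum2 (w i); rwa [hupd] at this
  by_cases hc : 0 ≤ Ψ i * b - a
  · refine ⟨Γ⁻¹, Or.inl rfl, ?_⟩
    rw [hsum, hsum2, h3, h4]
    have := key Γ⁻¹ (w i) hΓi0 hwi0
    have hnum : 0 ≤ (w i - Γ⁻¹) * (Ψ i * b - a) / ((w i + b) * (Γ⁻¹ + b)) := by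
      apply div_nonneg
      · exact mul_nonneg (by linarith [hwi.1]) hc
      · positivity
    linarith
  · refine ⟨Γ, Or.inr rfl, ?_⟩
    rw [hsum, hsum2, h3, h4]
    have := key Γ (w i) hΓ0 hwi0
    have hnum : 0 ≤ (w i - Γ) * (Ψ i * b - a) / ((w i + b) * (Γ + b)) := by
      apply div_nonneg
      · nlinarith [hwi.2]
      · positivity
    linarith

private lemma lfb_to_vertex {n : ℕ} {Γ : ℝ} (hΓ : 1 < Γ) (Ψ : Fin n → ℝ) :
    ∀ (k : ℕ) (w : Fin n → ℝ), (∀ i, w i ∈ Set.Icc Γ⁻¹ Γ) →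
      (univ.filter (fun i => ¬(w i = Γ⁻¹ ∨ w i = Γ))).card ≤ k →
      ∃ v : Fin n → ℝ, (∀ i, v i = Γ⁻¹ ∨ v i = Γ) ∧
        (∑ j, v j * Ψ j) / (∑ j, v j) ≤ (∑ j, w j * Ψ j) / (∑ j, w j) := by
  intro k
  induction k with
  | zero =>
    intro w hw hcard
    refine ⟨w, ?_, le_refl _⟩
    intro i
    by_contra h
    have : i ∈ univ.filter (fun i => ¬(w i = Γ⁻¹ ∨ w i = Γ)) := Finset.mem_filter.2 ⟨Finset.mem_univ i, h⟩
    have := Finset.card_pos.2 ⟨i, this⟩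
    omega
  | succ k ih =>
    intro w hw hcard
    by_cases hE : (univ.filter (fun i => ¬(w i = Γ⁻¹ ∨ w i = Γ))) = ∅
    · refine ⟨w, ?_, le_refl _⟩
      intro i
      by_contra h
      have : i ∈ univ.filter (fun i => ¬(w i = Γ⁻¹ ∨ w i = Γ)) := Finset.mem_filter.2 ⟨Finset.mem_univ i, h⟩
      rw [hE] at this; exact absurd this (Finset.notMem_empty i)
    · obtain ⟨i, hi⟩ := Finset.nonempty_of_ne_empty hE
      obtain ⟨t, ht, hle⟩ := lfb_step hΓ Ψ w hw i
      set w' := Function.update w i t with hw'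
      have hΓ0 : (0:ℝ) < Γ := lt_trans one_pos hΓ
      have hΓle : Γ⁻¹ ≤ Γ := le_trans (le_of_lt (inv_lt_one_of_one_lt₀ hΓ)) (le_of_lt hΓ)
      have hw'box : ∀ j, w' j ∈ Set.Icc Γ⁻¹ Γ := by
        intro j
        rcases eq_or_ne j i with rfl | hj
        · simp only [hw', Function.update_self]
          rcases ht with rfl | rfl
          · exact ⟨le_refl _, hΓle⟩
          · exact ⟨hΓle, le_refl _⟩
        · simpa [hw', Function.update_of_ne hj] using hw j
      have hsub : (univ.filter (fun j => ¬(w' j = Γ⁻¹ ∨ w' j = Γ))) ⊆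
          (univ.filter (fun j => ¬(w j = Γ⁻¹ ∨ w j = Γ))).erase i := by
        intro j hj
        simp only [Finset.mem_filter, Finset.mem_univ, true_and] at hj
        rcases eq_or_ne j i with rfl | hji
        · exact absurd ht (by simpa [hw'] using hj)
        · rw [Finset.mem_erase]
          refine ⟨hji, ?_⟩
          simp only [Finset.mem_filter, Finset.mem_univ, true_and]
          simpa [hw', Function.update_of_ne hji] using hj
      have hcard' : (univ.filter (fun j => ¬(w' j = Γ⁻¹ ∨ w' j = Γ))).card ≤ k := by
        have h1 := Finset.card_le_card hsub
        have h2 := Finset.card_erase_of_mem hi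
        omega
      obtain ⟨v, hv, hvle⟩ := ih w' hw'box hcard'
      exact ⟨v, hv, le_trans hvle hle⟩

/-- **Extreme points of the box in linear-fractional minimization.** For `n ≥ 1`, `Γ > 1` and
`Ψ ∈ ℝⁿ`, the minimum over `w ∈ [Γ⁻¹,Γ]ⁿ` of the weighted average
`(∑ᵢ wᵢΨᵢ)/(∑ᵢ wᵢ)` equals the minimum of the same ratio over the vertices `w ∈ {Γ⁻¹,Γ}ⁿ`;
in particular the minimum over the box is attained at a vertex. -/
theorem linear_fractional_min_on_box_at_vertex
    (n : ℕ) (hn : 1 ≤ n) (Γ : ℝ) (hΓ : 1 < Γ) (Ψ : Fin n → ℝ) :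
    sInf ((fun w : Fin n → ℝ => (∑ i, w i * Ψ i) / (∑ i, w i)) ''
        {w | ∀ i, w i ∈ Set.Icc Γ⁻¹ Γ}) =
      sInf ((fun w : Fin n → ℝ => (∑ i, w i * Ψ i) / (∑ i, w i)) ''
        {w | ∀ i, w i = Γ⁻¹ ∨ w i = Γ}) ∧
    ∃ w : Fin n → ℝ, (∀ i, w i = Γ⁻¹ ∨ w i = Γ) ∧
      (∑ i, w i * Ψ i) / (∑ i, w i) =
        sInf ((fun w : Fin n → ℝ => (∑ i, w i * Ψ i) / (∑ i, w i)) ''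
          {w | ∀ i, w i ∈ Set.Icc Γ⁻¹ Γ}) := by
  set g : (Fin n → ℝ) → ℝ := fun w => (∑ i, w i * Ψ i) / (∑ i, w i) with hg
  set V : Set (Fin n → ℝ) := {w | ∀ i, w i = Γ⁻¹ ∨ w i = Γ} with hV
  set B : Set (Fin n → ℝ) := {w | ∀ i, w i ∈ Set.Icc Γ⁻¹ Γ} with hB
  have hΓ0 : (0:ℝ) < Γ := lt_trans one_pos hΓ
  have hΓle : Γ⁻¹ ≤ Γ := le_trans (le_of_lt (inv_lt_one_of_one_lt₀ hΓ)) (le_of_lt hΓ)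
  have hVB : V ⊆ B := by
    intro w hw i
    rcases hw i with h | h <;> rw [h]
    · exact ⟨le_refl _, hΓle⟩
    · exact ⟨hΓle, le_refl _⟩
  -- V is finite
  have hVfin : V.Finite := by
    have : V ⊆ Set.pi Set.univ (fun _ : Fin n => ({Γ⁻¹, Γ} : Set ℝ)) := by
      intro w hw i _
      rcases hw i with h | h <;> simp [h]
    exact Set.Finite.subset (Set.Finite.pi (fun _ => (Set.finite_singleton Γ).insert Γ⁻¹)) this
  have hVne : V.Nonempty := ⟨fun _ => Γ, fun _ => Or.inr rfl⟩
  have hImfin : (g '' V).Finite := hVfin.image g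
  have hImne : (g '' V).Nonempty := hVne.image g
  have hmem : sInf (g '' V) ∈ g '' V := hImne.csInf_mem hImfin
  obtain ⟨w₀, hw₀V, hw₀⟩ := hmem
  have hbdd : BddBelow (g '' V) := hImfin.bddBelow
  -- lower bound on box image
  have hlb : ∀ x ∈ g '' B, sInf (g '' V) ≤ x := by
    rintro x ⟨w, hwB, rfl⟩
    obtain ⟨v, hvV, hvle⟩ := lfb_to_vertex hΓ Ψ
      (univ.filter (fun i => ¬(w i = Γ⁻¹ ∨ w i = Γ))).card w hwB (le_refl _)
    exact le_trans (csInf_le hbdd ⟨v, hvV, rfl⟩) hvle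
  have hBne : (g '' B).Nonempty := ⟨g w₀, w₀, hVB hw₀V, rfl⟩
  have heq : sInf (g '' B) = sInf (g '' V) := by
    apply le_antisymm
    · exact csInf_le ⟨sInf (g '' V), hlb⟩ ⟨w₀, hVB hw₀V, by rw [hw₀]⟩
    · exact le_csInf hBne hlb
  refine ⟨heq, w₀, hw₀V, ?_⟩
  show g w₀ = sInf (g '' B)
  rw [heq]; exact hw₀
end

section
/- (Closed form for the worst-case weighted average over a likelihood-ratio box.) Let n ≥ 1, Γ > 1, and Ψ ∈ ℝ^n with s = Σ_{i=1}^n Ψ_i. For k ∈ {1,…,n} let Ψ̄_k denote the average of the k smallest coordinates of Ψ. Then min over w ∈ [Γ^{-1}, Γ]^n of (Σ_{i=1}^n w_i Ψ_i)/(Σ_{i=1}^n w_i) equals s/n + min_{k ∈ {1,…,n}} ( Ψ̄_k − s/n ) / ( 1 + n/(k(Γ² − 1)) ). (This is the closed-form expression Q_j(Γ) from the theorem characterizing the worst-case upper prediction bound ē_τ^M(Γ).) -/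
set_option maxRecDepth 4000

private lemma wcwa_alg1 (s nR k g S : ℝ) (hn : 0 < nR) (hk : 0 < k) (hg : 0 < g) :
    s / nR + (S / k - s / nR) / (1 + nR / (k * g)) = (s + g * S) / (nR + k * g) := by
  have h1 : (0:ℝ) < k * g := by positivity
  have h2 : (0:ℝ) < 1 + nR / (k * g) := by positivity
  have h3 : (0:ℝ) < nR + k * g := by positivity
  field_simp
  ring

private lemma wcwa_alg2 (Γ s A k nR : ℝ) (hΓ : 1 < Γ) (hk : 0 < k) (hkn : k ≤ nR) :
    (Γ * A + Γ⁻¹ * (s - A)) / (k * Γ + (nR - k) * Γ⁻¹) = (s + (Γ^2-1)*A) / (nR + k*(Γ^2-1)) := by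
  have hΓ0 : (0:ℝ) < Γ := lt_trans one_pos hΓ
  have hg : (0:ℝ) < Γ^2 - 1 := by nlinarith
  have hden1 : 0 < k * Γ + (nR - k) * Γ⁻¹ := by
    have h0 : 0 ≤ (nR - k) * Γ⁻¹ := mul_nonneg (by linarith) (inv_nonneg.2 hΓ0.le)
    nlinarith [mul_pos hk hΓ0]
  have hden2 : 0 < nR + k*(Γ^2-1) := by nlinarith [mul_nonneg hk.le hg.le]
  rw [div_eq_div_iff hden1.ne' hden2.ne']
  field_simp
  ring

private lemma wcwa_alg3 (Γ c s S' k nR : ℝ) (hΓ : 1 < Γ)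
    (hc : c * (nR + k * (Γ^2-1)) ≤ s + (Γ^2-1) * S') :
    0 ≤ Γ * (S' - k * c) + Γ⁻¹ * ((s - S') - (nR - k) * c) := by
  have hΓ0 : (0:ℝ) < Γ := lt_trans one_pos hΓ
  have key : 0 ≤ Γ^2 * (S' - k*c) + ((s - S') - (nR - k)*c) := by nlinarith
  have h3 : Γ * (S' - k * c) + Γ⁻¹ * ((s - S') - (nR - k) * c)
      = Γ⁻¹ * (Γ^2 * (S' - k*c) + ((s - S') - (nR - k)*c)) := by
    field_simp
  rw [h3]
  exact mul_nonneg (inv_nonneg.2 hΓ0.le) key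

open Classical in
/-- **Closed form for the worst-case weighted average over a likelihood-ratio box
(Theorem 2, expression `Q_j(Γ)`).** Let `n ≥ 1`, `Γ > 1`, `Ψ ∈ ℝⁿ` with `s = ∑ᵢ Ψᵢ`, and let
`σ` be a permutation sorting the coordinates of `Ψ` in nondecreasing order, so that for
`j ∈ Fin n` the average of the `j+1` smallest coordinates is
`Ψ̄_{j+1} = (∑_{ℓ ≤ j} Ψ(σ(ℓ)))/(j+1)`. Then
`min_{w ∈ [Γ⁻¹,Γ]ⁿ} (∑ᵢ wᵢΨᵢ)/(∑ᵢ wᵢ)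
  = s/n + min_{1 ≤ k ≤ n} (Ψ̄_k − s/n)/(1 + n/(k(Γ²−1)))`. -/
theorem worstCase_weighted_average_closed_form
    (n : ℕ) (hn : 1 ≤ n) (Γ : ℝ) (hΓ : 1 < Γ) (Ψ : Fin n → ℝ)
    (σ : Equiv.Perm (Fin n)) (hσ : Monotone (fun i => Ψ (σ i))) :
    sInf ((fun w : Fin n → ℝ => (∑ i, w i * Ψ i) / (∑ i, w i)) ''
        {w | ∀ i, w i ∈ Set.Icc Γ⁻¹ Γ}) =
      (∑ i, Ψ i) / n +
        ⨅ j : Fin n,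
          ((∑ ℓ ∈ Finset.univ.filter (fun ℓ : Fin n => ℓ ≤ j), Ψ (σ ℓ)) / ((j.val : ℝ) + 1) -
              (∑ i, Ψ i) / n) /
            (1 + (n : ℝ) / (((j.val : ℝ) + 1) * (Γ ^ 2 - 1))) := by
  have hΓ0 : (0:ℝ) < Γ := lt_trans one_pos hΓ
  have hΓi : (0:ℝ) < Γ⁻¹ := inv_pos.2 hΓ0
  have hΓiΓ : Γ⁻¹ ≤ Γ := le_trans (le_of_lt (inv_lt_one_of_one_lt₀ hΓ)) hΓ.le
  have hΓ2 : (0:ℝ) < Γ ^ 2 - 1 := by nlinarith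
  have hn0 : (0:ℝ) < (n:ℝ) := by exact_mod_cast hn
  haveI : NeZero n := ⟨by omega⟩
  set s : ℝ := ∑ i, Ψ i with hs
  set S : ℕ → ℝ :=
    fun k => ∑ ℓ ∈ Finset.univ.filter (fun ℓ : Fin n => ℓ.val < k), Ψ (σ ℓ) with hS
  set G : ℕ → ℝ := fun k => (s + (Γ^2 - 1) * S k) / ((n:ℝ) + k * (Γ^2 - 1)) with hG
  have hden : ∀ k : ℕ, (0:ℝ) < (n:ℝ) + (k:ℝ) * (Γ^2-1) := fun k => by positivity
  have hsum : ∑ ℓ, Ψ (σ ℓ) = s := Equiv.sum_comp σ Ψ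
  have hSn : S n = s := by
    simp only [hS]
    rw [Finset.filter_true_of_mem (fun ℓ _ => ℓ.isLt)]
    exact hsum
  set F : Fin n → ℝ := fun j =>
    ((∑ ℓ ∈ Finset.univ.filter (fun ℓ : Fin n => ℓ ≤ j), Ψ (σ ℓ)) / ((j.val : ℝ) + 1) -
        s / n) / (1 + (n : ℝ) / (((j.val : ℝ) + 1) * (Γ ^ 2 - 1))) with hF
  have hfilt : ∀ j : Fin n, (Finset.univ.filter (fun ℓ : Fin n => ℓ ≤ j)) =
      Finset.univ.filter (fun ℓ : Fin n => ℓ.val < j.val + 1) := by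
    intro j; ext ℓ
    simp only [Finset.mem_filter, Finset.mem_univ, true_and, Fin.le_def, Nat.lt_succ_iff]
  have hcard1 : ∀ j : Fin n, (Finset.univ.filter (fun ℓ : Fin n => ℓ ≤ j)).card = j.val + 1 := by
    intro j
    rw [show (Finset.univ.filter (fun ℓ : Fin n => ℓ ≤ j)) = Finset.Iic j by ext; simp]
    exact Fin.card_Iic j
  -- key identity: s/n + F j = G (j+1)
  have hFG : ∀ j : Fin n, s / n + F j = G (j.val + 1) := by
    intro j
    simp only [hF, hG, hS]
    rw [hfilt j]
    push_cast
    exact wcwa_alg1 s n ((j.val:ℝ)+1) (Γ^2-1)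
      (∑ ℓ ∈ Finset.univ.filter (fun ℓ : Fin n => ℓ.val < j.val + 1), Ψ (σ ℓ))
      hn0 (by positivity) hΓ2
  -- G n = s / n
  have hGn : G n = s / n := by
    simp only [hG, hSn]
    rw [div_eq_div_iff (hden n).ne' hn0.ne']
    ring
  -- minimization over Fin n
  obtain ⟨j0, hj0⟩ := Finite.exists_min F
  have hbdd : BddBelow (Set.range F) := (Set.finite_range F).bddBelow
  have hInf : (⨅ j, F j) = F j0 := le_antisymm (ciInf_le hbdd j0) (le_ciInf hj0)
  set c : ℝ := s / n + F j0 with hc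
  have hcG : ∀ k : ℕ, k ≤ n → c ≤ G k := by
    intro k hk
    rcases Nat.eq_zero_or_pos k with rfl | hk1
    · have hS0 : S 0 = 0 := by
        simp only [hS]
        simp
      have hG0 : G 0 = s / n := by
        simp only [hG, hS0]
        norm_num
      rw [hG0]
      have hnn : n - 1 < n := by omega
      have hlast := hFG ⟨n-1, hnn⟩
      have e1 : (⟨n-1, hnn⟩ : Fin n).val + 1 = n := by
        have : n - 1 + 1 = n := by omega
        exact this
      rw [e1] at hlast
      have hle := hj0 ⟨n-1, hnn⟩
      rw [hc]
      linarith [hGn]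
    · have hkn' : k - 1 < n := by omega
      have h1 := hj0 ⟨k-1, hkn'⟩
      have h2 := hFG ⟨k-1, hkn'⟩
      have e2 : (⟨k-1, hkn'⟩ : Fin n).val + 1 = k := by
        have : k - 1 + 1 = k := by omega
        exact this
      rw [e2] at h2
      rw [hc]
      linarith
  -- lower bound for all w in the box
  have lower : ∀ w : Fin n → ℝ, (∀ i, w i ∈ Set.Icc Γ⁻¹ Γ) →
      c ≤ (∑ i, w i * Ψ i) / (∑ i, w i) := by
    intro w hw
    have hwpos : ∀ i, 0 < w i := fun i => lt_of_lt_of_le hΓi (hw i).1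
    have hsw : 0 < ∑ i, w i :=
      Finset.sum_pos (fun i _ => hwpos i) ⟨⟨0, hn⟩, Finset.mem_univ _⟩
    rw [le_div_iff₀ hsw]
    have expand : ∑ i, w i * (Ψ i - c) = (∑ i, w i * Ψ i) - c * ∑ i, w i := by
      simp only [mul_sub, Finset.sum_sub_distrib]
      rw [← Finset.sum_mul, mul_comm]
    have hmain : 0 ≤ ∑ i, w i * (Ψ i - c) := by
      have hre : ∑ i, w i * (Ψ i - c) = ∑ ℓ, w (σ ℓ) * (Ψ (σ ℓ) - c) :=
        (Equiv.sum_comp σ (fun i => w i * (Ψ i - c))).symm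
      rw [hre]
      set T := Finset.univ.filter (fun ℓ : Fin n => Ψ (σ ℓ) < c) with hT
      set k' := T.card with hk'
      have hk'n : k' ≤ n := by
        rw [hk']
        calc T.card ≤ Finset.univ.card := Finset.card_le_card (Finset.filter_subset _ _)
        _ = n := Finset.card_fin n
      have hmemT : ∀ ℓ : Fin n, ℓ ∈ T ↔ Ψ (σ ℓ) < c := by
        intro ℓ
        rw [hT, Finset.mem_filter]
        simp
      have hTd : ∀ ℓ ∈ T, ∀ m : Fin n, m ≤ ℓ → m ∈ T := by
        intro ℓ hℓ m hm
        rw [hmemT] at hℓ ⊢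
        exact lt_of_le_of_lt (hσ hm) hℓ
      have hTc : T = Finset.univ.filter (fun ℓ : Fin n => ℓ.val < k') := by
        ext ℓ
        rw [hmemT, Finset.mem_filter]
        simp only [Finset.mem_univ, true_and]
        constructor
        · intro hℓ
          have hℓT : ℓ ∈ T := (hmemT ℓ).mpr hℓ
          have hsub : Finset.Iic ℓ ⊆ T := fun m hm => hTd ℓ hℓT m (Finset.mem_Iic.mp hm)
          have := Finset.card_le_card hsub
          rw [Fin.card_Iic] at this
          omega
        · intro hℓ
          by_contra hnot
          have hnotT : ℓ ∉ T := fun h => hnot ((hmemT ℓ).mp h)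
          have hsub : T ⊆ Finset.Iio ℓ := by
            intro m hm
            rcases lt_or_ge m ℓ with h | h
            · exact Finset.mem_Iio.mpr h
            · exact absurd (hTd m hm ℓ h) hnotT
          have := Finset.card_le_card hsub
          rw [Fin.card_Iio] at this
          omega
      have hpt : ∀ ℓ : Fin n,
          (if Ψ (σ ℓ) < c then Γ else Γ⁻¹) * (Ψ (σ ℓ) - c) ≤ w (σ ℓ) * (Ψ (σ ℓ) - c) := by
        intro ℓ
        by_cases h : Ψ (σ ℓ) < c
        · simp only [if_pos h]
          exact mul_le_mul_of_nonpos_right (hw (σ ℓ)).2 (by linarith)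
        · simp only [if_neg h]
          exact mul_le_mul_of_nonneg_right (hw (σ ℓ)).1 (by linarith [not_lt.mp h])
      have hsum_le : ∑ ℓ, (if Ψ (σ ℓ) < c then Γ else Γ⁻¹) * (Ψ (σ ℓ) - c) ≤
          ∑ ℓ, w (σ ℓ) * (Ψ (σ ℓ) - c) := Finset.sum_le_sum (fun ℓ _ => hpt ℓ)
      have hS' : ∑ ℓ ∈ T, Ψ (σ ℓ) = S k' := by
        rw [hTc]
      have hTnot : ∑ ℓ ∈ Finset.univ.filter (fun ℓ : Fin n => ¬ Ψ (σ ℓ) < c), Ψ (σ ℓ) =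
          s - S k' := by
        have h0 := Finset.sum_filter_add_sum_filter_not Finset.univ
          (fun ℓ : Fin n => Ψ (σ ℓ) < c) (fun ℓ => Ψ (σ ℓ))
        rw [← hT, hS'] at h0
        linarith [hsum]
      have hcardnot : ((Finset.univ.filter (fun ℓ : Fin n => ¬ Ψ (σ ℓ) < c)).card : ℝ) =
          (n : ℝ) - (k' : ℝ) := by
        have h0 := Finset.card_filter_add_card_filter_not
          (s := Finset.univ) (p := fun ℓ : Fin n => Ψ (σ ℓ) < c)
        rw [← hT, Finset.card_fin] at h0
        have hle : (Finset.univ.filter (fun ℓ : Fin n => ¬ Ψ (σ ℓ) < c)).card = n - k' := by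
          omega
        rw [hle]
        push_cast [Nat.cast_sub hk'n]
        ring
      have hsplit : ∑ ℓ, (if Ψ (σ ℓ) < c then Γ else Γ⁻¹) * (Ψ (σ ℓ) - c)
          = Γ * (S k' - k' * c) + Γ⁻¹ * ((s - S k') - ((n:ℝ) - k') * c) := by
        rw [← Finset.sum_filter_add_sum_filter_not Finset.univ
          (fun ℓ : Fin n => Ψ (σ ℓ) < c)]
        rw [← hT]
        have h1 : ∑ ℓ ∈ T, (if Ψ (σ ℓ) < c then Γ else Γ⁻¹) * (Ψ (σ ℓ) - c)
            = Γ * (S k' - k' * c) := by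
          rw [Finset.sum_congr rfl (fun ℓ hℓ => by
            rw [if_pos ((hmemT ℓ).mp hℓ)])]
          rw [← Finset.mul_sum, Finset.sum_sub_distrib, Finset.sum_const, nsmul_eq_mul, hS']
        have h2 : ∑ ℓ ∈ Finset.univ.filter (fun ℓ : Fin n => ¬ Ψ (σ ℓ) < c),
            (if Ψ (σ ℓ) < c then Γ else Γ⁻¹) * (Ψ (σ ℓ) - c)
            = Γ⁻¹ * ((s - S k') - ((n:ℝ) - k') * c) := by
          rw [Finset.sum_congr rfl (fun ℓ hℓ => by
            rw [if_neg (Finset.mem_filter.mp hℓ).2])]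
          rw [← Finset.mul_sum, Finset.sum_sub_distrib, Finset.sum_const, nsmul_eq_mul,
            hTnot, hcardnot]
        rw [h1, h2]
      have hck : c * ((n:ℝ) + (k':ℝ) * (Γ^2-1)) ≤ s + (Γ^2-1) * S k' := by
        have h0 := hcG k' hk'n
        simp only [hG] at h0
        exact (le_div_iff₀ (hden k')).mp h0
      have halg := wcwa_alg3 Γ c s (S k') (k' : ℝ) (n : ℝ) hΓ hck
      linarith [hsum_le, hsplit, halg]
    linarith [expand, hmain]
  -- the vertex attaining the value c
  set wv : Fin n → ℝ := fun i => if σ.symm i ≤ j0 then Γ else Γ⁻¹ with hwv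
  have hwv_mem : ∀ i, wv i ∈ Set.Icc Γ⁻¹ Γ := by
    intro i
    rw [hwv]
    by_cases h : σ.symm i ≤ j0
    · simp only [if_pos h]; exact ⟨hΓiΓ, le_refl Γ⟩
    · simp only [if_neg h]; exact ⟨le_refl _, hΓiΓ⟩
  have hA : (∑ ℓ ∈ Finset.univ.filter (fun ℓ : Fin n => ℓ ≤ j0), Ψ (σ ℓ)) = S (j0.val + 1) := by
    rw [hfilt j0]
  have hAnot : ∑ ℓ ∈ Finset.univ.filter (fun ℓ : Fin n => ¬ ℓ ≤ j0), Ψ (σ ℓ) =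
      s - S (j0.val + 1) := by
    have h0 := Finset.sum_filter_add_sum_filter_not Finset.univ
      (fun ℓ : Fin n => ℓ ≤ j0) (fun ℓ => Ψ (σ ℓ))
    rw [hA] at h0
    linarith [hsum]
  have hcardnot2 : ((Finset.univ.filter (fun ℓ : Fin n => ¬ ℓ ≤ j0)).card : ℝ) =
      (n : ℝ) - ((j0.val:ℝ) + 1) := by
    have h0 := Finset.card_filter_add_card_filter_not
      (s := Finset.univ) (p := fun ℓ : Fin n => ℓ ≤ j0)
    rw [hcard1 j0, Finset.card_fin] at h0
    have hlt := j0.isLt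
    have hle : (Finset.univ.filter (fun ℓ : Fin n => ¬ ℓ ≤ j0)).card = n - (j0.val + 1) := by
      omega
    rw [hle]
    have hcc : ((n - (j0.val+1) : ℕ) : ℝ) = (n:ℝ) - ((j0.val:ℝ)+1) := by
      push_cast [Nat.cast_sub (by omega : j0.val + 1 ≤ n)]
      ring
    rw [hcc]
  have hwv1 : ∑ i, wv i * Ψ i =
      Γ * S (j0.val + 1) + Γ⁻¹ * (s - S (j0.val + 1)) := by
    rw [← Equiv.sum_comp σ (fun i => wv i * Ψ i)]
    simp only [hwv, Equiv.symm_apply_apply]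
    rw [← Finset.sum_filter_add_sum_filter_not Finset.univ (fun ℓ : Fin n => ℓ ≤ j0)]
    have h1 : ∑ ℓ ∈ Finset.univ.filter (fun ℓ : Fin n => ℓ ≤ j0),
        (if ℓ ≤ j0 then Γ else Γ⁻¹) * Ψ (σ ℓ) = Γ * S (j0.val + 1) := by
      rw [Finset.sum_congr rfl (fun ℓ hℓ => by
        rw [if_pos (Finset.mem_filter.mp hℓ).2])]
      rw [← Finset.mul_sum, hA]
    have h2 : ∑ ℓ ∈ Finset.univ.filter (fun ℓ : Fin n => ¬ ℓ ≤ j0),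
        (if ℓ ≤ j0 then Γ else Γ⁻¹) * Ψ (σ ℓ) = Γ⁻¹ * (s - S (j0.val + 1)) := by
      rw [Finset.sum_congr rfl (fun ℓ hℓ => by
        rw [if_neg (Finset.mem_filter.mp hℓ).2])]
      rw [← Finset.mul_sum, hAnot]
    rw [h1, h2]
  have hwv2 : ∑ i, wv i = ((j0.val:ℝ) + 1) * Γ + ((n:ℝ) - ((j0.val:ℝ) + 1)) * Γ⁻¹ := by
    rw [← Equiv.sum_comp σ wv]
    simp only [hwv, Equiv.symm_apply_apply]
    rw [← Finset.sum_filter_add_sum_filter_not Finset.univ (fun ℓ : Fin n => ℓ ≤ j0)]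
    have h1 : ∑ ℓ ∈ Finset.univ.filter (fun ℓ : Fin n => ℓ ≤ j0),
        (if ℓ ≤ j0 then Γ else Γ⁻¹) = ((j0.val:ℝ) + 1) * Γ := by
      rw [Finset.sum_congr rfl (fun ℓ hℓ => by
        rw [if_pos (Finset.mem_filter.mp hℓ).2])]
      rw [Finset.sum_const, hcard1 j0, nsmul_eq_mul]
      push_cast
      ring
    have h2 : ∑ ℓ ∈ Finset.univ.filter (fun ℓ : Fin n => ¬ ℓ ≤ j0),
        (if ℓ ≤ j0 then Γ else Γ⁻¹) = ((n:ℝ) - ((j0.val:ℝ) + 1)) * Γ⁻¹ := by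
      rw [Finset.sum_congr rfl (fun ℓ hℓ => by
        rw [if_neg (Finset.mem_filter.mp hℓ).2])]
      rw [Finset.sum_const, nsmul_eq_mul, hcardnot2]
    rw [h1, h2]
  have hwv_val : (∑ i, wv i * Ψ i) / (∑ i, wv i) = G (j0.val + 1) := by
    rw [hwv1, hwv2]
    have halg := wcwa_alg2 Γ s (S (j0.val + 1)) ((j0.val:ℝ)+1) (n:ℝ) hΓ (by positivity)
      (by exact_mod_cast Nat.succ_le_of_lt j0.isLt)
    rw [halg]
    simp only [hG]
    congr 1
    push_cast
    ring
  -- conclusion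
  have hc_mem : c ∈ ((fun w : Fin n → ℝ => (∑ i, w i * Ψ i) / (∑ i, w i)) ''
      {w | ∀ i, w i ∈ Set.Icc Γ⁻¹ Γ}) := by
    refine ⟨wv, hwv_mem, ?_⟩
    show (∑ i, wv i * Ψ i) / (∑ i, wv i) = c
    rw [hwv_val, ← hFG j0]
  have hlb : ∀ x ∈ ((fun w : Fin n → ℝ => (∑ i, w i * Ψ i) / (∑ i, w i)) ''
      {w | ∀ i, w i ∈ Set.Icc Γ⁻¹ Γ}), c ≤ x := by
    rintro x ⟨w, hw, rfl⟩
    exact lower w hw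
  rw [hInf]
  exact le_antisymm (csInf_le ⟨c, hlb⟩ hc_mem) (le_csInf ⟨c, hc_mem⟩ hlb)
end

section
/- (Deterministic counting core of the forecast-interval coverage bound.) Let n > r ≥ 1 be integers, τ ∈ (0,1), and f : 𝕋_{r+1,n+1} → ℝ any function. Let N = n!/(n−r−1)!. For each k ∈ {1,…,n+1}, let C_{−k} be the multiset of values { f(d_1,…,d_{r+1}) : (d_1,…,d_{r+1}) ∈ 𝕋_{r+1,n+1} with d_j ≠ k for all j } (which has exactly N elements), and let Ē_{k,τ} be the ⌈τ·N⌉-th smallest element of C_{−k}. Then ((n−r)!/(n+1)!) · #{ (d_1,…,d_{r+1}) ∈ 𝕋_{r+1,n+1} : f(d_1,…,d_{r+1}) ≤ Ē_{d_{r+1},τ} } ≥ τ·(n−r)/(n+1). (This counting inequality, applied conditionally on the unordered collection of samples via exchangeability, yields Proposition 1.) -/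
open Classical in
/-- The multiset `C_{−k}` of transfer errors `f(d_1,…,d_{r+1})` over tuples
`(d_1,…,d_{r+1}) ∈ 𝕋_{r+1,n+1}` avoiding the index `k` in every coordinate. -/
noncomputable def TransferUQ.Cavoid (n r : ℕ) (f : TransferUQ.Tup (r+1) (n+1) → ℝ)
    (k : Fin (n+1)) : Multiset ℝ :=
  (Finset.univ.filter (fun g : TransferUQ.Tup (r+1) (n+1) => ∀ j, g.val j ≠ k)).val.map f

/-- `Ē_{k,τ}`: the `⌈τ·N⌉`-th smallest element of the multiset `C_{−k}`, where
`N = n!/(n−r−1)!` is the number of elements of `C_{−k}` (so, 0-based, the entry at position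
`⌈τ·N⌉ − 1` of the nondecreasing sorted list of `C_{−k}`). -/
noncomputable def TransferUQ.Ebar (n r : ℕ) (τ : ℝ) (f : TransferUQ.Tup (r+1) (n+1) → ℝ)
    (k : Fin (n+1)) : ℝ :=
  (Multiset.sort (TransferUQ.Cavoid n r f k) (· ≤ ·)).getD
    (⌈τ * ((n.factorial : ℝ) / ((n - r - 1).factorial : ℝ))⌉₊ - 1) 0

/-! Put `m = ⌈τ N⌉`. Ranking all tuples by `f`, at least `m` tuples `g` have fewer than `m`
tuples strictly below them. For such a `g` with last index `k`, fewer than `m` elements of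
`C_{−k}` lie strictly below `f g`, so `f g` is at most the `m`-th smallest element `Ē_{k,τ}`.
Hence at least `m ≥ τ N` tuples are counted, and `(n−r)!/(n+1)! · N = (n−r)/(n+1)`. -/

open Finset TransferUQ

theorem List.Pairwise.le_getElem_of_countP_lt_le {α : Type*} [LinearOrder α] {L : List α}
    (hL : L.Pairwise (· ≤ ·)) {i : ℕ} (hi : i < L.length) {y : α}
    (hcount : L.countP (· < y) ≤ i) : y ≤ L[i] := by
  by_contra! hlt
  have hprefix : ∀ x ∈ L.take (i + 1), x < y := by
    intro x hx
    obtain ⟨j, hj, rfl⟩ := List.mem_take_iff_getElem.mp hx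
    exact (hL.rel_get_of_le (a := ⟨j, by omega⟩) (b := ⟨i, hi⟩) (by simp; omega)).trans_lt hlt
  have hsub := (List.take_sublist (i + 1) L).countP_le (p := (· < y))
  rw [List.countP_eq_length.mpr (by simpa using hprefix), List.length_take] at hsub
  omega

theorem Multiset.le_getD_sort_of_card_filter_lt_le {α : Type*} [LinearOrder α] (C : Multiset α)
    {i : ℕ} (hi : i < Multiset.card C) {y : α} (hcount : Multiset.card (C.filter (· < y)) ≤ i)
    (d : α) : y ≤ (C.sort (· ≤ ·)).getD i d := by
  have hi' : i < (C.sort (· ≤ ·)).length := by rwa [Multiset.length_sort]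
  rw [List.getD_eq_getElem _ _ hi']
  refine (Multiset.pairwise_sort C _).le_getElem_of_countP_lt_le hi' ?_
  rwa [← Multiset.sort_eq C (· ≤ ·), Multiset.filter_coe, Multiset.coe_card,
    ← List.countP_eq_length_filter] at hcount

theorem Finset.le_card_filter_card_filter_lt {α β : Type*} [Fintype α] [LinearOrder β]
    (f : α → β) {m : ℕ} (hm : m ≤ Fintype.card α) : m ≤ #{g | #{h | f h < f g} < m} := by
  classical
  set S : Finset α := {g | #{h | f h < f g} < m}
  by_contra! hS
  have hcompl : (univ \ S).Nonempty := by
    rw [← card_pos, card_sdiff_of_subset (subset_univ S), card_univ]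
    omega
  obtain ⟨g, hgS, hg_min⟩ := exists_min_image _ f hcompl
  have hbelow : ({h | f h < f g} : Finset α) ⊆ S := fun h hh => by
    by_contra hhS
    exact (mem_filter.mp hh).2.not_ge (hg_min h (mem_sdiff.mpr ⟨mem_univ h, hhS⟩))
  exact (mem_sdiff.mp hgS).2 (mem_filter.mpr ⟨mem_univ g, (card_le_card hbelow).trans_lt hS⟩)

theorem Nat.ceil_mul_le_of_le_one {τ : ℝ} (hτ : τ ≤ 1) (D : ℕ) : ⌈τ * D⌉₊ ≤ D :=
  Nat.ceil_le.mpr (mul_le_of_le_one_left (Nat.cast_nonneg _) hτ)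

namespace TransferUQ

theorem card_filter_forall_ne (s n : ℕ) (k : Fin (n + 1)) :
    #{g : Tup s (n + 1) | ∀ j, g.val j ≠ k} = n.descFactorial s := by
  rw [← Fintype.card_subtype]
  have e : {g : Tup s (n + 1) // ∀ j, g.val j ≠ k} ≃ (Fin s ↪ {x : Fin (n + 1) // x ≠ k}) :=
    { toFun := fun g =>
        ⟨fun j => ⟨g.1.1 j, g.2 j⟩, fun a b hab => g.1.2 (congrArg Subtype.val hab)⟩
      invFun := fun e => ⟨⟨fun j => e j, fun a b hab => e.injective (Subtype.ext hab)⟩,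
        fun j => (e j).2⟩
      left_inv := fun _ => rfl
      right_inv := fun _ => rfl }
  rw [Fintype.card_congr e, Fintype.card_embedding_eq, Fintype.card_fin,
    Fintype.card_subtype_compl, Fintype.card_subtype_eq, Fintype.card_fin, Nat.add_sub_cancel]

theorem cast_factorial_div_factorial {n r : ℕ} (hrn : r < n) :
    (n.factorial : ℝ) / (n - r - 1).factorial = n.descFactorial (r + 1) := by
  rw [div_eq_iff (by positivity), mul_comm, Nat.sub_sub]
  exact_mod_cast (Nat.factorial_mul_descFactorial hrn).symm

theorem factorial_sub_div_factorial_succ_mul_descFactorial {n r : ℕ} (hrn : r < n) :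
    ((n - r).factorial : ℝ) / (n + 1).factorial * n.descFactorial (r + 1) =
      ((n : ℝ) - r) / (n + 1) := by
  have h : (n - r).factorial * n.descFactorial (r + 1) = (n - r) * n.factorial := by
    rw [← Nat.mul_factorial_pred (by omega : n - r ≠ 0), mul_assoc, Nat.sub_sub,
      Nat.factorial_mul_descFactorial hrn]
  have h' : ((n - r).factorial : ℝ) * n.descFactorial (r + 1) = ((n : ℝ) - r) * n.factorial := by
    rw [← Nat.cast_sub hrn.le]; exact_mod_cast h
  rw [Nat.factorial_succ, div_mul_eq_mul_div, h']
  push_cast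
  field_simp

theorem le_Ebar_of_card_filter_lt {n r : ℕ} (hrn : r < n) {τ : ℝ} (hτ : τ ≤ 1)
    (f : Tup (r + 1) (n + 1) → ℝ) (k : Fin (n + 1)) {y : ℝ}
    (hy : #{g | f g < y} < ⌈τ * n.descFactorial (r + 1)⌉₊) : y ≤ Ebar n r τ f k := by
  have hD : 0 < n.descFactorial (r + 1) := Nat.descFactorial_pos.mpr hrn
  have hm := Nat.ceil_mul_le_of_le_one hτ (n.descFactorial (r + 1))
  rw [Ebar, cast_factorial_div_factorial hrn]
  apply Multiset.le_getD_sort_of_card_filter_lt_le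
  · rw [Cavoid, Multiset.card_map, ← Finset.card_def, card_filter_forall_ne]
    omega
  · rw [Cavoid, Multiset.filter_map, Multiset.card_map, ← Finset.filter_val, ← Finset.card_def]
    have hsub := card_le_card (filter_subset_filter (fun g => f g < y)
      (filter_subset (fun g : Tup (r + 1) (n + 1) => ∀ j, g.val j ≠ k) univ))
    exact Nat.le_pred_of_lt (hsub.trans_lt hy)

end TransferUQ

open Classical in
theorem counting_core_coverage_general
    (n r : ℕ) (hrn : r < n) (τ : ℝ) (hτ : τ ∈ Set.Ioo (0:ℝ) 1)
    (f : TransferUQ.Tup (r+1) (n+1) → ℝ) :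
    τ * ((n : ℝ) - r) / (n + 1) ≤
      ((n - r).factorial : ℝ) / ((n + 1).factorial : ℝ) *
        (Finset.univ.filter (fun g : TransferUQ.Tup (r+1) (n+1) =>
          f g ≤ TransferUQ.Ebar n r τ f (g.val (Fin.last r)))).card := by
  set D := n.descFactorial (r + 1)
  set m := ⌈τ * D⌉₊
  have hm_card : m ≤ Fintype.card (Tup (r + 1) (n + 1)) :=
    (Nat.ceil_mul_le_of_le_one hτ.2.le D).trans <|
      (card_filter_forall_ne (r + 1) n 0).symm.trans_le (card_filter_le _ _)
  have hm_good : m ≤ #{g | f g ≤ Ebar n r τ f (g.val (Fin.last r))} :=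
    (le_card_filter_card_filter_lt f hm_card).trans <| card_le_card fun g hg => by
      simp only [mem_filter, mem_univ, true_and] at hg ⊢
      exact le_Ebar_of_card_filter_lt hrn hτ.2.le f _ hg
  calc τ * ((n : ℝ) - r) / (n + 1)
      = (n - r).factorial / (n + 1).factorial * (τ * D) := by
        rw [mul_div_assoc, ← factorial_sub_div_factorial_succ_mul_descFactorial hrn]; ring
    _ ≤ (n - r).factorial / (n + 1).factorial *
          #{g | f g ≤ Ebar n r τ f (g.val (Fin.last r))} := by
        gcongr
        exact (Nat.le_ceil _).trans (by exact_mod_cast hm_good)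

open Classical in
/-- **Deterministic counting core of the forecast-interval coverage bound (Proposition 1).**
For any `f : 𝕋_{r+1,n+1} → ℝ` and `τ ∈ (0,1)`,
`((n−r)!/(n+1)!) · #{(d_1,…,d_{r+1}) ∈ 𝕋_{r+1,n+1} : f(d_1,…,d_{r+1}) ≤ Ē_{d_{r+1},τ}}
  ≥ τ(n−r)/(n+1)`. -/
theorem counting_core_coverage
    (n r : ℕ) (hr : 1 ≤ r) (hrn : r < n) (τ : ℝ) (hτ : τ ∈ Set.Ioo (0:ℝ) 1)
    (f : TransferUQ.Tup (r+1) (n+1) → ℝ) :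
    τ * ((n : ℝ) - r) / (n + 1) ≤
      ((n - r).factorial : ℝ) / ((n + 1).factorial : ℝ) *
        (Finset.univ.filter (fun g : TransferUQ.Tup (r+1) (n+1) =>
          f g ≤ TransferUQ.Ebar n r τ f (g.val (Fin.last r)))).card :=
  counting_core_coverage_general n r hrn τ hτ f
end
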